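/- Let H be a finite group, V a finite-dimensional complex inner product space, and φ : H → U(V) a unitary representation. Then the following are equivalent: (1) for every nonzero v ∈ V, the orbit φ(H)v = { φ(g)v : g ∈ H } is a tight frame for V, i.e., there exists α > 0 such that Σ_{w ∈ φ(H)v} |⟨w, x⟩|² = α·‖x‖² for all x ∈ V; (2) for every nonzero v ∈ V, the linear span of the orbit φ(H)v is all of V (i.e., φ is irreducible). -/

import Mathlib

/-!
The frame operator `S x = ∑_{w ∈ T} ⟪w, x⟫ • w` of a finite set `T` satisfies
`re ⟪x, S x⟫ = ∑_{w ∈ T} ‖⟪w, x⟫‖²`, so `T` is a tight frame as soon as `S` is a scalar whose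
real part is positive, and positivity is read off at any nonzero `v ∈ T`. When `T` is an orbit
of a unitary representation, `S` commutes with the representation; if every nonzero orbit
spans, an eigenspace of `S` contains the orbit of its eigenvector, so `S` is scalar (Schur).
Conversely, a vector orthogonal to a tight frame has norm zero, so a tight frame spans.
-/

open Finset

section Frames

variable {𝕜 V : Type*} [RCLike 𝕜] [NormedAddCommGroup V] [InnerProductSpace 𝕜 V]

variable (𝕜) in
def IsTightFrame (T : Finset V) : Prop :=
  ∃ α : ℝ, 0 < α ∧ ∀ x : V, ∑ w ∈ T, ‖(inner 𝕜 w x : 𝕜)‖ ^ 2 = α * ‖x‖ ^ 2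

theorem span_eq_top_of_isTightFrame {T : Finset V} (hT : IsTightFrame 𝕜 T) :
    Submodule.span 𝕜 (T : Set V) = ⊤ := by
  obtain ⟨α, hα, hframe⟩ := hT
  rw [← Submodule.orthogonal_eq_bot_iff, Submodule.eq_bot_iff]
  intro x hx
  have hsum : ∑ w ∈ T, ‖(inner 𝕜 w x : 𝕜)‖ ^ 2 = 0 :=
    sum_eq_zero fun w hw => by simp [hx w (Submodule.subset_span hw)]
  rw [hframe] at hsum
  simpa [hα.ne'] using hsum

variable (𝕜) in
def frameOperator (T : Finset V) : V →ₗ[𝕜] V :=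
  ∑ w ∈ T, (innerₛₗ 𝕜 w).smulRight w

theorem frameOperator_apply (T : Finset V) (x : V) :
    frameOperator 𝕜 T x = ∑ w ∈ T, (inner 𝕜 w x : 𝕜) • w := by
  simp [frameOperator]

theorem re_inner_frameOperator_self (T : Finset V) (x : V) :
    RCLike.re (inner 𝕜 x (frameOperator 𝕜 T x) : 𝕜) = ∑ w ∈ T, ‖(inner 𝕜 w x : 𝕜)‖ ^ 2 := by
  simp only [frameOperator_apply, inner_sum, inner_smul_right, map_sum]
  refine sum_congr rfl fun w _ => ?_
  rw [← inner_conj_symm x w, RCLike.mul_conj, ← RCLike.ofReal_pow, RCLike.ofReal_re]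

theorem frameOperator_map_of_image_eq [DecidableEq V] {T : Finset V} {U : V →ₗ[𝕜] V}
    (hU : ∀ x y, (inner 𝕜 (U x) (U y) : 𝕜) = inner 𝕜 x y) (hT : T.image U = T) (x : V) :
    frameOperator 𝕜 T (U x) = U (frameOperator 𝕜 T x) := by
  have hinj : Function.Injective U := (U.isometryOfInner hU).injective
  conv_lhs => rw [← hT]
  rw [frameOperator_apply, frameOperator_apply, sum_image hinj.injOn, map_sum]
  simp only [hU, map_smul]

theorem isTightFrame_of_frameOperator_eq_smul {T : Finset V} {c : 𝕜}
    (hc : frameOperator 𝕜 T = c • 1) {v : V} (hvT : v ∈ T) (hv : v ≠ 0) :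
    IsTightFrame 𝕜 T := by
  have hsum : ∀ x, ∑ w ∈ T, ‖(inner 𝕜 w x : 𝕜)‖ ^ 2 = RCLike.re c * ‖x‖ ^ 2 := by
    intro x
    rw [← re_inner_frameOperator_self, hc, LinearMap.smul_apply, Module.End.one_apply,
      inner_smul_right, inner_self_eq_norm_sq_to_K, ← RCLike.ofReal_pow, RCLike.re_mul_ofReal]
  refine ⟨RCLike.re c, ?_, hsum⟩
  have hpos : 0 < ∑ w ∈ T, ‖(inner 𝕜 w v : 𝕜)‖ ^ 2 :=
    sum_pos' (fun w _ => by positivity)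
      ⟨v, hvT, pow_pos (norm_pos_iff.mpr (inner_self_ne_zero.mpr hv)) 2⟩
  rw [hsum] at hpos
  exact pos_of_mul_pos_left hpos (by positivity)

end Frames

theorem Module.End.exists_eq_smul_one_of_commute_of_span_eq_top {K W ι : Type*} [Field K]
    [IsAlgClosed K] [AddCommGroup W] [Module K W] [FiniteDimensional K W] [Nontrivial W]
    (ρ : ι → Module.End K W)
    (hspan : ∀ v : W, v ≠ 0 → Submodule.span K (Set.range fun i => ρ i v) = ⊤)
    (S : Module.End K W) (hS : ∀ i, Commute S (ρ i)) :
    ∃ μ : K, S = μ • 1 := by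
  obtain ⟨μ, hμ⟩ := Module.End.exists_eigenvalue S
  obtain ⟨u, hu⟩ := hμ.exists_hasEigenvector
  refine ⟨μ, ?_⟩
  have htop : Module.End.eigenspace S μ = ⊤ := by
    rw [eq_top_iff, ← hspan u hu.2, Submodule.span_le]
    rintro _ ⟨i, rfl⟩
    rw [SetLike.mem_coe, Module.End.mem_eigenspace_iff, ← Module.End.mul_apply, (hS i).eq,
      Module.End.mul_apply, Module.End.mem_eigenspace_iff.mp hu.1, map_smul]
  ext x
  exact Module.End.mem_eigenspace_iff.mp (htop ▸ Submodule.mem_top)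

theorem image_orbit_eq {G R M : Type*} [Group G] [Fintype G] [Semiring R] [AddCommMonoid M]
    [Module R M] [DecidableEq M] (φ : G →* Module.End R M) (g : G) (v : M) :
    (univ.image fun h => φ h v).image (φ g) = univ.image fun h => φ h v := by
  rw [image_image]
  ext w
  simp only [mem_image, mem_univ, true_and, Function.comp_apply, ← Module.End.mul_apply,
    ← map_mul]
  exact ⟨fun ⟨h, hw⟩ => ⟨g * h, hw⟩, fun ⟨h, hw⟩ => ⟨g⁻¹ * h, by simpa using hw⟩⟩

open Classical in
/-- For a unitary representation `φ` of a finite group `H` on a finite-dimensional complex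
inner product space `V`, the following are equivalent: (1) every orbit `φ(H)v` of a
nonzero vector `v` is a tight frame, i.e. there is `α > 0` with
`∑_{w ∈ φ(H)v} |⟨w, x⟩|² = α ‖x‖²` for all `x`; (2) every orbit of a nonzero vector spans
`V` (i.e. `φ` is irreducible). -/
theorem orbit_tight_frame_iff_orbit_spans
    {H V : Type*} [Group H] [Fintype H]
    [NormedAddCommGroup V] [InnerProductSpace ℂ V] [FiniteDimensional ℂ V]
    (φ : H →* (V →ₗ[ℂ] V))
    (hunit : ∀ (g : H) (x y : V), (inner ℂ (φ g x) (φ g y) : ℂ) = inner ℂ x y) :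
    (∀ v : V, v ≠ 0 → ∃ α : ℝ, 0 < α ∧ ∀ x : V,
        ∑ w ∈ Finset.univ.image (fun g : H => φ g v), ‖(inner ℂ w x : ℂ)‖ ^ 2 = α * ‖x‖ ^ 2)
      ↔
    (∀ v : V, v ≠ 0 → Submodule.span ℂ (Set.range fun g : H => φ g v) = ⊤) := by
  refine ⟨fun hframe v hv => ?_, fun hspan v hv => ?_⟩
  · simpa using span_eq_top_of_isTightFrame (hframe v hv)
  · have : Nontrivial V := nontrivial_of_ne v 0 hv
    set T := univ.image fun g : H => φ g v
    have hcomm (g : H) : Commute (frameOperator ℂ T) (φ g) :=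
      LinearMap.ext (frameOperator_map_of_image_eq (hunit g) (image_orbit_eq φ g v))
    obtain ⟨μ, hμ⟩ :=
      Module.End.exists_eq_smul_one_of_commute_of_span_eq_top (fun g => φ g) hspan _ hcomm
    have hvT : v ∈ T := mem_image.mpr ⟨1, mem_univ _, by simp⟩
    exact isTightFrame_of_frameOperator_eq_smul hμ hvT hv
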